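/- Let x₀, v_max, a > 0 and t₀ < t_f1 ≤ t_f, with Δ := t_f − t₀ and S := t_f − t_f1. Assume Δ ≥ x₀/v_max + v_max/a and 0 ≤ S ≤ x₀/v_max − v_max/a. Define t_stop := t₀ + x₀/v_max − S, t_dec := t_stop − v_max/a, t_acc := t_f1 − v_max/a, and x* on [t₀, t_f] by: x*(s) = −x₀ + v_max(s − t₀) for s ∈ [t₀, t_dec]; x*(s) = −x₀ + v_max(s − t₀) − (a/2)(s − t_dec)² for s ∈ [t_dec, t_stop]; x*(s) = −v_max·S − v_max²/(2a) for s ∈ [t_stop, t_acc]; x*(s) = −v_max·S − v_max²/(2a) + (a/2)(s − t_acc)² for s ∈ [t_acc, t_f1]; x*(s) = −v_max·S + v_max(s − t_f1) for s ∈ [t_f1, t_f]. Then x* belongs to Π(t₀, t_f, x₀, v_max, a) and satisfies x*(t_f1) = −v_max·S. -/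

import Mathlib

/-!
The velocity of `x*` is `a` times the distance from `s` to the rest interval `[t_stop, t_acc]`,
capped at `v_max`. Written as `min v_max (a * max (max (t_stop - s) (s - t_acc)) 0)` it is
visibly `a`-Lipschitz with values in `[0, v_max]`. Each of the five pieces of `x*` has this
derivative on its own interval, and consecutive pieces agree at the knots (this is where
`t_stop - t_dec = t_f1 - t_acc = v_max / a` and the definition of `t_stop` enter), so the
glued function is differentiable on all of `ℝ` with this derivative.
-/

/-- The class `Π(t₀, t_f, x₀, v_max, a)` of compatible trajectories. -/
def CompatTraj (t₀ tf x₀ vmax a : ℝ) : Set (ℝ → ℝ) :=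
  {x | ContDiffOn ℝ 1 x (Set.Icc t₀ tf) ∧
    LipschitzOnWith (Real.toNNReal a) (deriv x) (Set.Icc t₀ tf) ∧
    (∀ s ∈ Set.Icc t₀ tf, 0 ≤ deriv x s ∧ deriv x s ≤ vmax) ∧
    x t₀ = -x₀ ∧ deriv x t₀ = vmax ∧ x tf = 0 ∧ deriv x tf = vmax}

/-- The closed-form trajectory with a full stop: drive at `v_max`, decelerate at `−a`
to rest, rest, accelerate at `a` back to `v_max` at the platoon head's crossing time
`t_f1`, then drive at `v_max`. -/
noncomputable def xStarStop (x₀ vmax a t₀ tf1 tf : ℝ) (s : ℝ) : ℝ :=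
  let S := tf - tf1
  let tstop := t₀ + x₀ / vmax - S
  let tdec := tstop - vmax / a
  let tacc := tf1 - vmax / a
  if s ≤ tdec then -x₀ + vmax * (s - t₀)
  else if s ≤ tstop then -x₀ + vmax * (s - t₀) - a / 2 * (s - tdec) ^ 2
  else if s ≤ tacc then -vmax * S - vmax ^ 2 / (2 * a)
  else if s ≤ tf1 then -vmax * S - vmax ^ 2 / (2 * a) + a / 2 * (s - tacc) ^ 2
  else -vmax * S + vmax * (s - tf1)

open Set

lemma hasDerivAt_ite_le {F : Type*} [NormedAddCommGroup F] [NormedSpace ℝ F] {g h v : ℝ → F}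
    {c : ℝ} {S : Set ℝ}
    (hg : ∀ u ∈ S, u ≤ c → HasDerivAt g (v u) u) (hh : ∀ u, c ≤ u → HasDerivAt h (v u) u)
    (hgh : g c = h c) : ∀ u ∈ S, HasDerivAt (fun s => if s ≤ c then g s else h s) (v u) u := by
  intro u hu
  rcases lt_trichotomy u c with hlt | rfl | hgt
  · refine (hg u hu hlt.le).congr_of_eventuallyEq ?_
    filter_upwards [Iio_mem_nhds hlt] with s hs
    exact if_pos (le_of_lt hs)
  · have hleft : HasDerivWithinAt (fun s => if s ≤ u then g s else h s) (v u) (Iic u) u :=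
      (hg u hu le_rfl).hasDerivWithinAt.congr (fun s hs => if_pos hs) (if_pos le_rfl)
    have hright : HasDerivWithinAt (fun s => if s ≤ u then g s else h s) (v u) (Ici u) u := by
      refine (hh u le_rfl).hasDerivWithinAt.congr (fun s hs => ?_) (by simp [hgh])
      rcases (mem_Ici.1 hs).eq_or_lt with rfl | hs
      · simp [hgh]
      · exact if_neg (not_le.2 hs)
    simpa [Iic_union_Ici] using hleft.union hright
  · refine (hh u hgt.le).congr_of_eventuallyEq ?_
    filter_upwards [Ioi_mem_nhds hgt] with s hs
    exact if_neg (not_le.2 hs)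

def stopSpeed (vmax a p q s : ℝ) : ℝ := min vmax (a * max (max (p - s) (s - q)) 0)

section stopSpeed

variable {vmax a p q s : ℝ}

lemma lipschitzWith_stopSpeed (vmax : ℝ) (ha : 0 ≤ a) (p q : ℝ) :
    LipschitzWith (Real.toNNReal a) (stopSpeed vmax a p q) := by
  have hdist : LipschitzWith 1 fun s : ℝ => max (max (p - s) (s - q)) 0 := by
    simpa using ((IsometryEquiv.subLeft p).isometry.lipschitz.max
      (IsometryEquiv.subRight q).isometry.lipschitz).max_const 0
  have hK : ‖a‖₊ * 1 = Real.toNNReal a := by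
    rw [mul_one, Real.nnnorm_of_nonneg ha, Real.toNNReal_of_nonneg ha]
  exact hK ▸ ((lipschitzWith_smul a).comp hdist).const_min vmax

lemma stopSpeed_nonneg (hv : 0 ≤ vmax) (ha : 0 ≤ a) : 0 ≤ stopSpeed vmax a p q s :=
  le_min hv (mul_nonneg ha (le_max_right _ _))

lemma stopSpeed_le : stopSpeed vmax a p q s ≤ vmax := min_le_left _ _

lemma stopSpeed_of_le_sub (ha : 0 < a) (hs : s ≤ p - vmax / a) :
    stopSpeed vmax a p q s = vmax := by
  refine min_eq_left ?_
  calc vmax = a * (vmax / a) := by field_simp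
    _ ≤ a * (p - s) := by gcongr; linarith
    _ ≤ _ := by gcongr; exact le_max_of_le_left (le_max_left _ _)

lemma stopSpeed_of_add_le (ha : 0 < a) (hs : q + vmax / a ≤ s) :
    stopSpeed vmax a p q s = vmax := by
  refine min_eq_left ?_
  calc vmax = a * (vmax / a) := by field_simp
    _ ≤ a * (s - q) := by gcongr; linarith
    _ ≤ _ := by gcongr; exact le_max_of_le_left (le_max_right _ _)

lemma stopSpeed_of_mem_Icc_sub (ha : 0 < a) (hpq : p ≤ q) (hs : s ∈ Icc (p - vmax / a) p) :
    stopSpeed vmax a p q s = a * (p - s) := by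
  have hmax : max (max (p - s) (s - q)) 0 = p - s := by
    rw [max_eq_left (by linarith [hs.2] : s - q ≤ p - s),
      max_eq_left (by linarith [hs.2] : 0 ≤ p - s)]
  rw [stopSpeed, hmax, min_eq_right]
  calc a * (p - s) ≤ a * (vmax / a) := by gcongr; linarith [hs.1]
    _ = vmax := by field_simp

lemma stopSpeed_of_mem_Icc_add (ha : 0 < a) (hpq : p ≤ q) (hs : s ∈ Icc q (q + vmax / a)) :
    stopSpeed vmax a p q s = a * (s - q) := by
  have hmax : max (max (p - s) (s - q)) 0 = s - q := by
    rw [max_eq_right (by linarith [hs.1] : p - s ≤ s - q),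
      max_eq_left (by linarith [hs.1] : 0 ≤ s - q)]
  rw [stopSpeed, hmax, min_eq_right]
  calc a * (s - q) ≤ a * (vmax / a) := by gcongr; linarith [hs.2]
    _ = vmax := by field_simp

lemma stopSpeed_of_mem_Icc (hv : 0 ≤ vmax) (hs : s ∈ Icc p q) : stopSpeed vmax a p q s = 0 := by
  rw [stopSpeed, max_eq_right (max_le (by linarith [hs.1]) (by linarith [hs.2])), mul_zero,
    min_eq_right hv]

end stopSpeed

lemma hasDerivAt_xStarStop {x₀ vmax a t₀ tf1 tf : ℝ} (hv : 0 < vmax) (ha : 0 < a)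
    (hΔ : x₀ / vmax + vmax / a ≤ tf - t₀) (s : ℝ) :
    HasDerivAt (xStarStop x₀ vmax a t₀ tf1 tf)
      (stopSpeed vmax a (t₀ + x₀ / vmax - (tf - tf1)) (tf1 - vmax / a) s) s := by
  unfold xStarStop
  simp only
  set tstop := t₀ + x₀ / vmax - (tf - tf1) with htstop
  set tacc := tf1 - vmax / a with htacc
  have hpq : tstop ≤ tacc := by linarith
  clear_value tstop tacc
  have hb : 0 < vmax / a := div_pos hv ha
  refine hasDerivAt_ite_le (S := univ) (fun u _ hu => ?cruise)
    (hasDerivAt_ite_le (S := Ici (tstop - vmax / a)) (fun u hu hu' => ?decel)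
      (hasDerivAt_ite_le (S := Ici tstop) (fun u hu hu' => ?rest)
        (hasDerivAt_ite_le (S := Ici tacc) (fun u hu hu' => ?accel)
          (fun u hu => ?cruise') ?m₄) ?m₃) ?m₂) ?m₁ s (mem_univ s)
  case cruise =>
    rw [stopSpeed_of_le_sub ha hu]
    simpa using ((hasDerivAt_id u).sub_const t₀).const_mul vmax |>.const_add (-x₀)
  case decel =>
    rw [stopSpeed_of_mem_Icc_sub ha hpq ⟨hu, hu'⟩]
    refine ((((hasDerivAt_id' u).sub_const t₀).const_mul vmax).const_add (-x₀)).fun_sub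
      ((((hasDerivAt_id' u).sub_const (tstop - vmax / a)).fun_pow 2).const_mul (a / 2))
      |>.congr_deriv ?_
    norm_num
    field_simp
    ring
  case rest =>
    rw [stopSpeed_of_mem_Icc hv.le ⟨hu, hu'⟩]
    exact hasDerivAt_const u _
  case accel =>
    rw [stopSpeed_of_mem_Icc_add ha hpq ⟨hu, by linarith⟩]
    refine ((((hasDerivAt_id' u).sub_const tacc).fun_pow 2).const_mul (a / 2)).const_add
      (-vmax * (tf - tf1) - vmax ^ 2 / (2 * a)) |>.congr_deriv ?_
    ring
  case cruise' =>
    rw [stopSpeed_of_add_le ha (by linarith)]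
    simpa using
      ((hasDerivAt_id u).sub_const tf1).const_mul vmax |>.const_add (-vmax * (tf - tf1))
  case m₄ =>
    rw [htacc]
    field_simp
    ring
  case m₃ =>
    rw [if_pos (by linarith)]
    ring
  case m₂ =>
    rw [if_pos hpq, htstop]
    field_simp
    ring
  case m₁ =>
    rw [if_pos (by linarith)]
    ring

lemma xStarStop_start {x₀ vmax a t₀ tf1 tf : ℝ} (hS : tf - tf1 ≤ x₀ / vmax - vmax / a) :
    xStarStop x₀ vmax a t₀ tf1 tf t₀ = -x₀ := by
  rw [xStarStop, if_pos (by linarith)]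
  ring

lemma xStarStop_of_le {x₀ vmax a t₀ tf1 tf s : ℝ} (hv : 0 < vmax) (ha : 0 < a)
    (hΔ : x₀ / vmax + vmax / a ≤ tf - t₀) (hs : tf1 ≤ s) :
    xStarStop x₀ vmax a t₀ tf1 tf s = vmax * (s - tf) := by
  have hb : 0 < vmax / a := div_pos hv ha
  rw [xStarStop, if_neg (by linarith), if_neg (by linarith), if_neg (by linarith)]
  rcases hs.eq_or_lt with rfl | hs
  · rw [if_pos le_rfl]
    field_simp
    ring
  · rw [if_neg (not_le.2 hs)]
    ring

theorem xStarStop_feasible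
    (x₀ vmax a t₀ tf1 tf : ℝ)
    (hv : 0 < vmax) (ha : 0 < a)
    (htf : tf1 ≤ tf)
    (hΔ : tf - t₀ ≥ x₀ / vmax + vmax / a)
    (hS : tf - tf1 ≤ x₀ / vmax - vmax / a) :
    xStarStop x₀ vmax a t₀ tf1 tf ∈ CompatTraj t₀ tf x₀ vmax a ∧
    xStarStop x₀ vmax a t₀ tf1 tf tf1 = -vmax * (tf - tf1) := by
  have hderiv := hasDerivAt_xStarStop (tf1 := tf1) hv ha hΔ
  have hderiv_eq : deriv (xStarStop x₀ vmax a t₀ tf1 tf) = stopSpeed vmax a _ _ :=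
    funext fun s => (hderiv s).deriv
  have hlip := lipschitzWith_stopSpeed vmax ha.le (t₀ + x₀ / vmax - (tf - tf1)) (tf1 - vmax / a)
  refine ⟨⟨?_, ?_, ?_, xStarStop_start hS, ?_, ?_, ?_⟩, ?_⟩
  · exact (contDiff_one_iff_deriv.2 ⟨fun s => (hderiv s).differentiableAt,
      hderiv_eq ▸ hlip.continuous⟩).contDiffOn
  · exact hderiv_eq ▸ hlip.lipschitzOnWith
  · exact fun s _ => hderiv_eq ▸ ⟨stopSpeed_nonneg hv.le ha.le, stopSpeed_le⟩
  · rw [hderiv_eq, stopSpeed_of_le_sub ha (by linarith)]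
  · rw [xStarStop_of_le hv ha hΔ htf, sub_self, mul_zero]
  · rw [hderiv_eq, stopSpeed_of_add_le ha (by linarith)]
  · rw [xStarStop_of_le hv ha hΔ le_rfl]
    ring
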